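/- arXiv:2206.03822 — 3 statements merged into one kernel-verified Lean document; each statement's English description precedes it below -/
import Mathlib

section
/- For any real number p > 1 and any non-negative real numbers a, b, one has (a+b)^(p+1) ≥ a^(p+1) + b^(p+1) + p·(a^p·b + a·b^p). -/
open Real

lemma bernoulli_aux (p a b : ℝ) (hp : 1 < p) (ha : 0 < a) (hb : 0 ≤ b) :
    a ^ p + p * a ^ (p - 1) * b ≤ (a + b) ^ p := by
  have hba : -1 ≤ b / a := le_trans (by norm_num) (div_nonneg hb ha.le)
  have key := one_add_mul_self_le_rpow_one_add hba hp.le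
  have h1 : (a + b) ^ p = a ^ p * (1 + b / a) ^ p := by
    rw [← Real.mul_rpow ha.le (by positivity)]
    congr 1
    field_simp
  rw [h1]
  have h2 : a ^ (p - 1) = a ^ p / a := by
    rw [Real.rpow_sub ha, Real.rpow_one]
  rw [h2]
  have hap : 0 < a ^ p := Real.rpow_pos_of_pos ha p
  calc a ^ p + p * (a ^ p / a) * b = a ^ p * (1 + p * (b / a)) := by
        field_simp
    _ ≤ a ^ p * (1 + b / a) ^ p := mul_le_mul_of_nonneg_left key hap.le

theorem convex_ineq (p a b : ℝ) (hp : 1 < p) (ha : 0 ≤ a) (hb : 0 ≤ b) :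
    (a + b) ^ (p + 1) ≥ a ^ (p + 1) + b ^ (p + 1) + p * (a ^ p * b + a * b ^ p) := by
  have hp0 : p ≠ 0 := by linarith
  have hp1 : p + 1 ≠ 0 := by linarith
  rcases eq_or_lt_of_le ha with h | h
  · simp [← h, Real.zero_rpow hp0, Real.zero_rpow hp1]
  rcases eq_or_lt_of_le hb with h' | h'
  · simp [← h', Real.zero_rpow hp0, Real.zero_rpow hp1]
  have h1 := bernoulli_aux p a b hp h h'.le
  have h2 := bernoulli_aux p b a hp h' h.le
  have hab : 0 < a + b := by linarith
  have e : (a + b) ^ (p + 1) = a * (a + b) ^ p + b * (a + b) ^ p := by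
    rw [Real.rpow_add_one hab.ne', ← add_mul]; ring
  have ea : a ^ (p + 1) = a * a ^ p := by
    rw [Real.rpow_add_one h.ne']; ring
  have eb : b ^ (p + 1) = b * b ^ p := by
    rw [Real.rpow_add_one h'.ne']; ring
  have eap : a ^ (p - 1) * a = a ^ p := by
    rw [← Real.rpow_add_one h.ne']; ring_nf
  have ebp : b ^ (p - 1) * b = b ^ p := by
    rw [← Real.rpow_add_one h'.ne']; ring_nf
  rw [add_comm b a] at h2
  have H1 : a * a ^ p + p * (a ^ p * b) ≤ a * (a + b) ^ p := by
    calc a * a ^ p + p * (a ^ p * b) = a * (a ^ p + p * a ^ (p - 1) * b) := by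
          rw [← eap]; ring
      _ ≤ a * (a + b) ^ p := mul_le_mul_of_nonneg_left h1 ha
  have H2 : b * b ^ p + p * (a * b ^ p) ≤ b * (a + b) ^ p := by
    calc b * b ^ p + p * (a * b ^ p) = b * (b ^ p + p * b ^ (p - 1) * a) := by
          rw [← ebp]; ring
      _ ≤ b * (a + b) ^ p := mul_le_mul_of_nonneg_left h2 hb
  rw [ge_iff_le, e, ea, eb]
  linarith
end

section
/- For any real p > 1, the supremum over t ∈ [0,1] of (t² + (1-t)²) / (t^(p+1) + (1-t)^(p+1))^(2/(p+1)) equals 2^((p-1)/(p+1)), and this supremum is attained only at t = 1/2. -/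
lemma sup_quot_strict (p : ℝ) (hp : 1 < p) (t : ℝ) (ht0 : 0 ≤ t) (ht1 : t ≤ 1)
    (hne : t ≠ 1 / 2) :
    t ^ 2 + (1 - t) ^ 2 <
      2 ^ ((p - 1) / (p + 1)) * (t ^ (p + 1) + (1 - t) ^ (p + 1)) ^ (2 / (p + 1)) := by
  have hp1 : (0:ℝ) < p + 1 := by linarith
  have hs0 : (0:ℝ) ≤ 1 - t := by linarith
  set a := t ^ 2 with ha
  set b := (1 - t) ^ 2 with hb
  have ha0 : 0 ≤ a := sq_nonneg t
  have hb0 : 0 ≤ b := sq_nonneg (1 - t)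
  have hab : a ≠ b := by
    intro h
    apply hne
    rw [ha, hb] at h
    nlinarith
  set r := (p + 1) / 2 with hr
  have hr1 : 1 < r := by rw [hr]; linarith
  -- strict convexity of x ↦ x ^ r on [0, ∞)
  have hconv := (strictConvexOn_rpow hr1).2 (Set.mem_Ici.mpr ha0) (Set.mem_Ici.mpr hb0) hab
    (by norm_num : (0:ℝ) < 1/2) (by norm_num : (0:ℝ) < 1/2) (by norm_num)
  simp only [smul_eq_mul] at hconv
  -- identify a ^ r = t ^ (p+1), b ^ r = (1-t) ^ (p+1)
  have hid : ∀ x : ℝ, 0 ≤ x → (x ^ 2) ^ r = x ^ (p + 1) := by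
    intro x hx
    rw [← Real.rpow_natCast x 2, ← Real.rpow_mul hx]
    congr 1
    rw [hr]
    push_cast
    ring
  rw [ha, hb, hid t ht0, hid (1 - t) hs0] at hconv
  -- hconv : (1/2 * t^2 + 1/2 * (1-t)^2) ^ r < 1/2 * t^(p+1) + 1/2 * (1-t)^(p+1)
  set g := t ^ (p + 1) + (1 - t) ^ (p + 1) with hg
  have hg0 : 0 < g := by
    rcases lt_or_eq_of_le ht0 with h | h
    · have := Real.rpow_pos_of_pos h (p + 1)
      have := Real.rpow_nonneg hs0 (p + 1)
      rw [hg]; linarith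
    · have h1 : (0:ℝ) < 1 - t := by rw [← h]; norm_num
      have := Real.rpow_pos_of_pos h1 (p + 1)
      have := Real.rpow_nonneg ht0 (p + 1)
      rw [hg]; linarith
  have hconv' : ((a + b) / 2) ^ r < g / 2 := by
    rw [ha, hb, hg]
    calc ((t ^ 2 + (1 - t) ^ 2) / 2) ^ r
        = (1/2 * t ^ 2 + 1/2 * (1 - t) ^ 2) ^ r := by ring_nf
      _ < 1/2 * t ^ (p + 1) + 1/2 * (1 - t) ^ (p + 1) := hconv
      _ = (t ^ (p + 1) + (1 - t) ^ (p + 1)) / 2 := by ring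
  -- raise to power 2/(p+1) = 1/r
  have hexp : 0 < 2 / (p + 1) := by positivity
  have habn : 0 ≤ (a + b) / 2 := by positivity
  have hstep := Real.rpow_lt_rpow (Real.rpow_nonneg habn r) hconv' hexp
  rw [← Real.rpow_mul habn] at hstep
  have hr2 : r * (2 / (p + 1)) = 1 := by
    rw [hr]; field_simp
  rw [hr2, Real.rpow_one] at hstep
  -- hstep : (a+b)/2 < (g/2) ^ (2/(p+1))
  have hdiv : (g / 2) ^ (2 / (p + 1)) = g ^ (2 / (p + 1)) * 2 ^ (-(2 / (p + 1)) : ℝ) := by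
    rw [div_eq_mul_inv, Real.mul_rpow hg0.le (by norm_num),
      ← Real.rpow_neg_one (2:ℝ), ← Real.rpow_mul (by norm_num : (0:ℝ) ≤ 2)]
    norm_num
  rw [hdiv] at hstep
  have htwo : (2:ℝ) * 2 ^ (-(2 / (p + 1)) : ℝ) = 2 ^ ((p - 1) / (p + 1)) := by
    rw [show (2:ℝ) * 2 ^ (-(2 / (p + 1)) : ℝ) = 2 ^ (1:ℝ) * 2 ^ (-(2 / (p + 1)) : ℝ) by
      norm_num, ← Real.rpow_add (by norm_num : (0:ℝ) < 2)]
    congr 1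
    field_simp
    ring
  have : a + b < 2 * (g ^ (2 / (p + 1)) * 2 ^ (-(2 / (p + 1)) : ℝ)) := by linarith
  calc a + b < 2 * (g ^ (2 / (p + 1)) * 2 ^ (-(2 / (p + 1)) : ℝ)) := this
    _ = (2 * 2 ^ (-(2 / (p + 1)) : ℝ)) * g ^ (2 / (p + 1)) := by ring
    _ = 2 ^ ((p - 1) / (p + 1)) * g ^ (2 / (p + 1)) := by rw [htwo]

lemma sup_quot_half (p : ℝ) (hp : 1 < p) :
    ((1/2:ℝ) ^ 2 + (1 - 1/2) ^ 2) /
      ((1/2:ℝ) ^ (p + 1) + (1 - 1/2) ^ (p + 1)) ^ (2 / (p + 1))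
      = 2 ^ ((p - 1) / (p + 1)) := by
  have hp1 : (0:ℝ) < p + 1 := by linarith
  have h1 : ((1/2:ℝ)) ^ (p + 1) = 2 ^ (-(p + 1)) := by
    rw [show (1/2:ℝ) = 2 ^ (-1:ℝ) by norm_num [Real.rpow_neg_one],
      ← Real.rpow_mul (by norm_num : (0:ℝ) ≤ 2)]
    norm_num
  have h2 : ((1/2:ℝ) ^ (p + 1) + (1 - 1/2) ^ (p + 1)) = 2 ^ (-p : ℝ) := by
    rw [show (1 - 1/2 : ℝ) = 1/2 by norm_num, h1,
      show (2:ℝ) ^ (-(p+1)) + 2 ^ (-(p+1)) = 2 ^ (1:ℝ) * 2 ^ (-(p+1)) by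
        rw [Real.rpow_one]; ring,
      ← Real.rpow_add (by norm_num : (0:ℝ) < 2)]
    ring_nf
  rw [h2, ← Real.rpow_mul (by norm_num : (0:ℝ) ≤ 2)]
  have h3 : ((1/2:ℝ) ^ 2 + (1 - 1/2) ^ 2) = 2 ^ (-1:ℝ) := by
    rw [Real.rpow_neg_one]; norm_num
  rw [h3, ← Real.rpow_sub (by norm_num : (0:ℝ) < 2)]
  congr 1
  field_simp
  ring

theorem sup_quotient_eq (p : ℝ) (hp : 1 < p)
    (F : ℝ → ℝ)
    (hF : ∀ t, F t = (t ^ 2 + (1 - t) ^ 2) /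
      (t ^ (p + 1) + (1 - t) ^ (p + 1)) ^ (2 / (p + 1))) :
    (∀ t ∈ Set.Icc (0 : ℝ) 1, F t ≤ 2 ^ ((p - 1) / (p + 1))) ∧
    F (1 / 2) = 2 ^ ((p - 1) / (p + 1)) ∧
    (∀ t ∈ Set.Icc (0 : ℝ) 1, F t = 2 ^ ((p - 1) / (p + 1)) → t = 1 / 2) := by
  have hg0 : ∀ t : ℝ, 0 ≤ t → t ≤ 1 →
      0 < (t ^ (p + 1) + (1 - t) ^ (p + 1)) ^ (2 / (p + 1)) := by
    intro t ht0 ht1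
    have hs0 : (0:ℝ) ≤ 1 - t := by linarith
    have hg : 0 < t ^ (p + 1) + (1 - t) ^ (p + 1) := by
      rcases lt_or_eq_of_le ht0 with h | h
      · have := Real.rpow_pos_of_pos h (p + 1)
        have := Real.rpow_nonneg hs0 (p + 1)
        linarith
      · have h1 : (0:ℝ) < 1 - t := by rw [← h]; norm_num
        have := Real.rpow_pos_of_pos h1 (p + 1)
        have := Real.rpow_nonneg ht0 (p + 1)
        linarith
    exact Real.rpow_pos_of_pos hg _
  have hhalf : F (1/2) = 2 ^ ((p - 1) / (p + 1)) := by
    rw [hF]; exact sup_quot_half p hp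
  refine ⟨?_, hhalf, ?_⟩
  · intro t ht
    by_cases h : t = 1/2
    · rw [h, hhalf]
    · rw [hF, div_le_iff₀ (hg0 t ht.1 ht.2)]
      exact (sup_quot_strict p hp t ht.1 ht.2 h).le
  · intro t ht hEq
    by_contra h
    have := sup_quot_strict p hp t ht.1 ht.2 h
    rw [hF, div_eq_iff (hg0 t ht.1 ht.2).ne'] at hEq
    linarith
end

section
/- Let p > 1 and t ∈ [0,1] with t ≠ 1/2. Then (t² + (1-t)²) / (t^(p+1) + (1-t)^(p+1))^(2/(p+1)) < 2^((p-1)/(p+1)). -/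
theorem strict_quotient_ineq (p t : ℝ) (hp : 1 < p)
    (ht : t ∈ Set.Icc (0 : ℝ) 1) (ht' : t ≠ 1 / 2) :
    (t ^ 2 + (1 - t) ^ 2) /
      (t ^ (p + 1) + (1 - t) ^ (p + 1)) ^ (2 / (p + 1)) <
      2 ^ ((p - 1) / (p + 1)) := by
  obtain ⟨ht0, ht1⟩ := ht
  set q : ℝ := p + 1 with hq
  have hqpos : (0:ℝ) < q := by simp [hq]; linarith
  have ht1' : (0:ℝ) ≤ 1 - t := by linarith
  have hxy : t ^ 2 ≠ (1 - t) ^ 2 := by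
    intro h
    apply ht'
    nlinarith [h]
  -- strict convexity
  have hconv := (strictConvexOn_rpow (by simp [hq]; linarith : 1 < q / 2)).2
    (Set.mem_Ici.2 (sq_nonneg t)) (Set.mem_Ici.2 (sq_nonneg (1 - t))) hxy
    (by norm_num : (0:ℝ) < 1/2) (by norm_num : (0:ℝ) < 1/2) (by norm_num)
  simp only [smul_eq_mul] at hconv
  have e1 : (t ^ 2 : ℝ) ^ (q/2) = t ^ q := by
    rw [← Real.rpow_natCast t 2, ← Real.rpow_mul ht0]
    congr 1; ring
  have e2 : ((1 - t) ^ 2 : ℝ) ^ (q/2) = (1 - t) ^ q := by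
    rw [← Real.rpow_natCast (1 - t) 2, ← Real.rpow_mul ht1']
    congr 1; ring
  rw [e1, e2] at hconv
  set A : ℝ := t ^ 2 + (1 - t) ^ 2 with hA
  set S : ℝ := t ^ q + (1 - t) ^ q with hS
  have hconv' : (A / 2) ^ (q/2) < S / 2 := by
    have : 1/2 * t ^ 2 + 1/2 * (1 - t) ^ 2 = A / 2 := by ring
    rw [this] at hconv
    linarith [hconv]
  have hSpos : 0 < S := by
    rcases eq_or_lt_of_le ht0 with h | h
    · have : (1 - t) ^ q = 1 := by rw [← h]; norm_num
      have h2 : 0 ≤ t ^ q := Real.rpow_nonneg ht0 q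
      simp [hS, this]; linarith
    · have := Real.rpow_pos_of_pos h q
      have h2 : 0 ≤ (1 - t) ^ q := Real.rpow_nonneg ht1' q
      simp [hS]; linarith
  have hApos : 0 ≤ A / 2 := by positivity
  have h2q : (0:ℝ) < 2 / q := by positivity
  have step := Real.rpow_lt_rpow (Real.rpow_nonneg hApos _) hconv' h2q
  rw [← Real.rpow_mul hApos] at step
  have : q / 2 * (2 / q) = 1 := by field_simp
  rw [this, Real.rpow_one, Real.div_rpow (le_of_lt hSpos) (by norm_num)] at step
  -- step : A / 2 < S ^ (2/q) / 2 ^ (2/q)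
  have hSq : (0:ℝ) < S ^ (2/q) := Real.rpow_pos_of_pos hSpos _
  have h2pow : (0:ℝ) < (2:ℝ) ^ (2/q) := Real.rpow_pos_of_pos (by norm_num) _
  have key : A < 2 ^ ((p-1)/q) * S ^ (2/q) := by
    have h2 : (2:ℝ) ^ ((p-1)/q) = 2 / 2 ^ (2/q) := by
      rw [eq_div_iff (ne_of_gt h2pow), ← Real.rpow_add (by norm_num : (0:ℝ) < 2)]
      have : (p-1)/q + 2/q = 1 := by field_simp [hq]; ring
      rw [this, Real.rpow_one]
    rw [h2]
    calc A = 2 * (A / 2) := by ring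
    _ < 2 * (S ^ (2/q) / 2 ^ (2/q)) := by linarith
    _ = 2 / 2 ^ (2/q) * S ^ (2/q) := by ring
  rw [div_lt_iff₀ hSq]
  exact key
end
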